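/- (Proposition 1(b)) In the emissions market model, suppose (A*_t)_{t=0}^{T} is an equilibrium allowance price process with corresponding equilibrium policies (ϑ*^i, ξ*^i) for i ∈ I. Then for each agent i ∈ I and each t = 0, …, T−1, the equilibrium abatement satisfies ξ*^i_t = c^i_t(A*_t), where c^i_t(a)(ω) is the unique minimizer of x ↦ C^i_t(x)(ω) − a·x over [0, E^i_t(ω)]. -/

import Mathlib

open MeasureTheory ProbabilityTheory
open scoped ENNReal

noncomputable section

/-- Extended (`EReal`-valued) expectation of a real random variable; its value is
meaningful (in `(-∞, +∞]`) whenever the negative part is integrable. -/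
def eexp {Ω : Type*} [MeasurableSpace Ω] (P : Measure Ω) (f : Ω → ℝ) : EReal :=
  ((∫⁻ ω, ENNReal.ofReal (f ω) ∂P : ℝ≥0∞) : EReal) -
    ((∫⁻ ω, ENNReal.ofReal (-f ω) ∂P : ℝ≥0∞) : EReal)

/-- The expectation of `f` exists, with value finite or `+∞`: `f` is a.e.-measurable and
its negative part is integrable. -/
def EexpExists {Ω : Type*} [MeasurableSpace Ω] (P : Measure Ω) (f : Ω → ℝ) : Prop :=
  AEMeasurable f P ∧ ∫⁻ ω, ENNReal.ofReal (-f ω) ∂P < ⊤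

/-- Terminal wealth (revenue) of an agent with cost functions `Cf`, business-as-usual
emissions `Eb` and effective initial allocation `γ`, facing allowance prices `A` and
penalty `π`, following the trading strategy `ϑ` and the abatement strategy `ξ`:
`L^{A}(ϑ, ξ) = −Σ_{t<T} (ϑ_t A_t + C_t(ξ_t)) − ϑ_T A_T
  − π (Σ_{t<T} (E_t − ξ_t − ϑ_t) − γ − ϑ_T)⁺`. -/
def wealth {Ω : Type*} (T : ℕ) (π : ℝ) (Cf : ℕ → ℝ → Ω → ℝ) (Eb : ℕ → Ω → ℝ)
    (γ : Ω → ℝ) (A ϑ ξ : ℕ → Ω → ℝ) (ω : Ω) : ℝ :=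
  -(∑ t ∈ Finset.range T, (ϑ t ω * A t ω + Cf t (ξ t ω) ω)) - ϑ T ω * A T ω -
    π * max (∑ t ∈ Finset.range T, (Eb t ω - ξ t ω - ϑ t ω) - γ ω - ϑ T ω) 0

/-- A policy `(ϑ, ξ)` is admissible: both processes are adapted and the abatement
satisfies `0 ≤ ξ_t ≤ E_t` for `t = 0, …, T−1`. -/
def Admissible {Ω : Type*} [m0 : MeasurableSpace Ω] (ℱ : MeasureTheory.Filtration ℕ m0)
    (T : ℕ) (Eb : ℕ → Ω → ℝ) (ϑ ξ : ℕ → Ω → ℝ) : Prop :=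
  (∀ t ≤ T, StronglyMeasurable[ℱ t] (ϑ t)) ∧
  (∀ t < T, StronglyMeasurable[ℱ t] (ξ t)) ∧
  (∀ t < T, ∀ ω, 0 ≤ ξ t ω ∧ ξ t ω ≤ Eb t ω)

/-- `A` is an equilibrium allowance price process with corresponding equilibrium policies
`(ϑs i, ξs i)`, `i ∈ I`: each `(ϑs i, ξs i)` is admissible with finite equilibrium
expected utility, cumulative position changes are in zero net supply, and each agent's
policy maximizes its expected utility among admissible policies whose expected utility
exists (is finite or `+∞`). -/
def IsEquilibrium {Ω : Type*} [m0 : MeasurableSpace Ω] (P : Measure Ω)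
    (ℱ : MeasureTheory.Filtration ℕ m0) (T : ℕ) (π : ℝ) {I : Type*} [Fintype I]
    (Eb : I → ℕ → Ω → ℝ) (Cf : I → ℕ → ℝ → Ω → ℝ) (γ : I → Ω → ℝ) (U : I → ℝ → ℝ)
    (A : ℕ → Ω → ℝ) (ϑs ξs : I → ℕ → Ω → ℝ) : Prop :=
  (∀ i, Admissible ℱ T (Eb i) (ϑs i) (ξs i)) ∧
  (∀ i, Integrable
    (fun ω => U i (wealth T π (Cf i) (Eb i) (γ i) A (ϑs i) (ξs i) ω)) P) ∧
  (∀ t ≤ T, ∀ ω, ∑ i, ϑs i t ω = 0) ∧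
  (∀ i, ∀ ϑ ξ : ℕ → Ω → ℝ, Admissible ℱ T (Eb i) ϑ ξ →
    EexpExists P (fun ω => U i (wealth T π (Cf i) (Eb i) (γ i) A ϑ ξ ω)) →
    eexp P (fun ω => U i (wealth T π (Cf i) (Eb i) (γ i) A ϑ ξ ω)) ≤
      eexp P (fun ω => U i (wealth T π (Cf i) (Eb i) (γ i) A (ϑs i) (ξs i) ω)))
/-!
An equilibrium policy cannot be improved by an admissible deviation. If agent `i` abates `x`
instead of `ξ*^i_t` at time `t` and buys the `ξ*^i_t − x` allowances it then lacks at the price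
`A*_t`, its net position and hence its penalty are unchanged, and its wealth grows by
`(C^i_t(ξ*^i_t) − A*_t ξ*^i_t) − (C^i_t(x) − A*_t x)`. Choosing `x` as the better of `ξ*^i_t`
and a fixed `ℱ_t`-measurable abatement gives a deviation which strictly raises the (strictly
increasing) utility wherever it helps, so `ξ*^i_t` is a.s. no worse than any such abatement.
Testing this against the countably many abatements `max 0 (min E^i_t q)`, `q ∈ ℚ`, and using
continuity of the cost, `ξ*^i_t` minimizes `C^i_t(x) − A*_t x` a.s.; strict convexity makes the
minimizer unique.
-/

open Set Function Finset

lemma isMinOn_Icc_of_forall_rat_le {f : ℝ → ℝ} {a b x₀ : ℝ} (hf : ContinuousOn f (Icc a b))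
    (hx₀ : x₀ ∈ Icc a b) (h : ∀ q : ℚ, f x₀ ≤ f (max a (min b q))) :
    IsMinOn f (Icc a b) x₀ := by
  have hab : a ≤ b := hx₀.1.trans hx₀.2
  have hg : Continuous fun y => f (projIcc a b hab y) :=
    hf.comp_continuous (continuous_subtype_val.comp continuous_projIcc) fun y =>
      (projIcc a b hab y).2
  refine fun x hx => show f x₀ ≤ f x from not_lt.1 fun hlt => ?_
  obtain ⟨q, hq⟩ := Rat.denseRange_cast.exists_mem_open (isOpen_lt hg continuous_const)
    ⟨x, show f (projIcc a b hab x) < f x₀ by rwa [projIcc_of_mem hab hx]⟩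
  exact (h q).not_gt hq

section ExtendedExpectation

variable {Ω : Type*} [MeasurableSpace Ω] {P : Measure Ω} {f g : Ω → ℝ}

lemma eexp_of_integrable (hf : Integrable f P) : eexp P f = ((∫ ω, f ω ∂P : ℝ) : EReal) := by
  have hneg : ∫⁻ ω, ENNReal.ofReal (-f ω) ∂P ≠ ⊤ := hf.neg.lintegral_lt_top.ne
  rw [integral_eq_lintegral_pos_part_sub_lintegral_neg_part hf, EReal.coe_sub,
    EReal.coe_ennreal_toReal hf.lintegral_lt_top.ne, EReal.coe_ennreal_toReal hneg, eexp]

lemma eexp_mono (h : ∀ ω, f ω ≤ g ω) : eexp P f ≤ eexp P g :=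
  EReal.sub_le_sub
    (EReal.coe_ennreal_le_coe_ennreal_iff.2 <| lintegral_mono fun ω =>
      ENNReal.ofReal_le_ofReal (h ω))
    (EReal.coe_ennreal_le_coe_ennreal_iff.2 <| lintegral_mono fun ω =>
      ENNReal.ofReal_le_ofReal (neg_le_neg (h ω)))

lemma EexpExists.of_integrable_le (hf : Integrable f P) (hg : AEMeasurable g P)
    (h : ∀ ω, f ω ≤ g ω) : EexpExists P g :=
  ⟨hg, (lintegral_mono fun ω => ENNReal.ofReal_le_ofReal (neg_le_neg (h ω))).trans_lt
    hf.neg.lintegral_lt_top⟩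

lemma eexp_lt_eexp [IsFiniteMeasure P] (hf : Integrable f P) (hg : AEMeasurable g P)
    (h : ∀ ω, f ω ≤ g ω) (hlt : P {ω | f ω < g ω} ≠ 0) : eexp P f < eexp P g := by
  -- `g` need not be integrable, but its truncation at `f + 1` is
  set k : Ω → ℝ := fun ω => min (g ω) (f ω + 1)
  have hfk : ∀ ω, f ω ≤ k ω := fun ω => le_min (h ω) (by linarith)
  have hk : Integrable k P :=
    integrable_of_le_of_le (hg.min (hf.aemeasurable.add_const 1)).aestronglyMeasurable
      (ae_of_all _ hfk) (ae_of_all _ fun ω => min_le_right _ _) hf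
      (hf.add (integrable_const 1))
  have hint_lt : ∫ ω, f ω ∂P < ∫ ω, k ω ∂P := by
    rw [← sub_pos, ← integral_sub hk hf,
      integral_pos_iff_support_of_nonneg (fun ω => sub_nonneg.2 (hfk ω)) (hk.sub hf)]
    refine pos_iff_ne_zero.2 (mt (measure_mono_null fun ω hω => ?_) hlt)
    exact (sub_pos.2 (lt_min hω.out (lt_add_one _))).ne'
  calc eexp P f = ((∫ ω, f ω ∂P : ℝ) : EReal) := eexp_of_integrable hf
    _ < ((∫ ω, k ω ∂P : ℝ) : EReal) := EReal.coe_lt_coe_iff.2 hint_lt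
    _ = eexp P k := (eexp_of_integrable hk).symm
    _ ≤ eexp P g := eexp_mono fun ω => min_le_left _ _

end ExtendedExpectation

section Wealth

variable {Ω : Type*} {T t : ℕ} {π : ℝ} {C : ℕ → ℝ → Ω → ℝ} {E : ℕ → Ω → ℝ} {γ : Ω → ℝ}
  {A ϑ ξ : ℕ → Ω → ℝ}

lemma wealth_update_abatement (ht : t < T) (x : Ω → ℝ) (ω : Ω) :
    wealth T π C E γ A (update ϑ t (ϑ t + ξ t - x)) (update ξ t x) ω =
      wealth T π C E γ A ϑ ξ ω +
        ((C t (ξ t ω) ω - A t ω * ξ t ω) - (C t (x ω) ω - A t ω * x ω)) := by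
  have hpay : ∀ s, update ϑ t (ϑ t + ξ t - x) s ω * A s ω + C s (update ξ t x s ω) ω =
      ϑ s ω * A s ω + C s (ξ s ω) ω + if s = t then
        (C t (x ω) ω - A t ω * x ω) - (C t (ξ t ω) ω - A t ω * ξ t ω) else 0 := by
    intro s
    rcases eq_or_ne s t with rfl | hst
    · simp only [update_self, Pi.add_apply, Pi.sub_apply, if_true]; ring
    · simp only [update_of_ne hst, if_neg hst, add_zero]
  have hnet : ∀ s, E s ω - update ξ t x s ω - update ϑ t (ϑ t + ξ t - x) s ω =
      E s ω - ξ s ω - ϑ s ω := by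
    intro s
    rcases eq_or_ne s t with rfl | hst
    · simp only [update_self, Pi.add_apply, Pi.sub_apply]; ring
    · simp only [update_of_ne hst]
  simp only [wealth, hpay, hnet, sum_add_distrib, sum_ite_eq', Finset.mem_range, if_pos ht,
    update_of_ne ht.ne']
  ring

variable [m0 : MeasurableSpace Ω] {ℱ : Filtration ℕ m0}

lemma Admissible.update_abatement (h : Admissible ℱ T E ϑ ξ) (ht : t < T) {x : Ω → ℝ}
    (hx : StronglyMeasurable[ℱ t] x) (hxE : ∀ ω, x ω ∈ Icc 0 (E t ω)) :
    Admissible ℱ T E (update ϑ t (ϑ t + ξ t - x)) (update ξ t x) := by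
  obtain ⟨hϑ, hξ, hξE⟩ := h
  refine ⟨fun s hs => ?_, fun s hs => ?_, fun s hs ω => ?_⟩ <;>
    rcases eq_or_ne s t with rfl | hst
  · simpa only [update_self] using ((hϑ s hs).add (hξ s ht)).sub hx
  · simpa only [update_of_ne hst] using hϑ s hs
  · simpa only [update_self] using hx
  · simpa only [update_of_ne hst] using hξ s hs
  · simp only [update_self]; exact hxE ω
  · simpa only [update_of_ne hst] using hξE s hs ω

lemma Admissible.measurable_wealth (h : Admissible ℱ T E ϑ ξ)
    (hC : ∀ s < T, Measurable[(inferInstance : MeasurableSpace ℝ).prod (ℱ s)] (uncurry (C s)))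
    (hE : ∀ s < T, StronglyMeasurable[ℱ s] (E s)) (hA : ∀ s ≤ T, StronglyMeasurable[ℱ s] (A s))
    (hγ : Measurable γ) : Measurable (wealth T π C E γ A ϑ ξ) := by
  obtain ⟨hϑ, hξ, -⟩ := h
  have hadapted : ∀ s {f : Ω → ℝ}, StronglyMeasurable[ℱ s] f → Measurable f :=
    fun s _ hf => hf.measurable.mono (ℱ.le s) le_rfl
  have hpay : Measurable fun ω => ∑ s ∈ range T, (ϑ s ω * A s ω + C s (ξ s ω) ω) :=
    Finset.measurable_sum _ fun s hs => by
      have hs := mem_range.1 hs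
      exact ((hadapted s (hϑ s hs.le)).mul (hadapted s (hA s hs.le))).add
        (((hC s hs).comp ((hξ s hs).measurable.prodMk measurable_id)).mono (ℱ.le s) le_rfl)
  have hnet : Measurable fun ω => ∑ s ∈ range T, (E s ω - ξ s ω - ϑ s ω) :=
    Finset.measurable_sum _ fun s hs => by
      have hs := mem_range.1 hs
      exact ((hadapted s (hE s hs)).sub (hadapted s (hξ s hs))).sub (hadapted s (hϑ s hs.le))
  have hϑT := hadapted T (hϑ T le_rfl)
  have hAT := hadapted T (hA T le_rfl)
  unfold wealth
  fun_prop

end Wealth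

lemma measurable_comp_sub_mul {Ω : Type*} {_ : MeasurableSpace Ω} {C : ℝ → Ω → ℝ}
    {a y : Ω → ℝ} (hC : Measurable (uncurry C)) (ha : Measurable a) (hy : Measurable y) :
    Measurable fun ω => C (y ω) ω - a ω * y ω :=
  (hC.comp (hy.prodMk measurable_id)).sub (ha.mul hy)

section Equilibrium

variable {Ω : Type*} [m0 : MeasurableSpace Ω] {P : Measure Ω} [IsFiniteMeasure P]
  {ℱ : Filtration ℕ m0} {T t : ℕ} {π : ℝ} {I : Type*} [Fintype I] {Eb : I → ℕ → Ω → ℝ}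
  {Cf : I → ℕ → ℝ → Ω → ℝ} {γ : I → Ω → ℝ} {U : I → ℝ → ℝ} {A : ℕ → Ω → ℝ}
  {ϑs ξs : I → ℕ → Ω → ℝ}

lemma IsEquilibrium.measure_abatement_saving_eq_zero
    (heq : IsEquilibrium P ℱ T π Eb Cf γ U A ϑs ξs)
    (hEb : ∀ i, ∀ t < T, StronglyMeasurable[ℱ t] (Eb i t))
    (hC : ∀ i, ∀ t < T,
      Measurable[(inferInstance : MeasurableSpace ℝ).prod (ℱ t)] (uncurry (Cf i t)))
    (hγ : ∀ i, Measurable (γ i)) (hU : ∀ i, StrictMono (U i))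
    (hA : ∀ t ≤ T, StronglyMeasurable[ℱ t] (A t)) (i : I) (ht : t < T) {x : Ω → ℝ}
    (hx : StronglyMeasurable[ℱ t] x) (hxE : ∀ ω, x ω ∈ Icc 0 (Eb i t ω))
    (hle : ∀ ω, Cf i t (x ω) ω - A t ω * x ω ≤ Cf i t (ξs i t ω) ω - A t ω * ξs i t ω) :
    P {ω | Cf i t (x ω) ω - A t ω * x ω < Cf i t (ξs i t ω) ω - A t ω * ξs i t ω} = 0 := by
  obtain ⟨hadm, hint, -, hopt⟩ := heq
  set D := fun ω => (Cf i t (ξs i t ω) ω - A t ω * ξs i t ω) - (Cf i t (x ω) ω - A t ω * x ω)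
  have hD : Measurable[ℱ t] D :=
    (measurable_comp_sub_mul (hC i t ht) (hA t ht.le).measurable
      ((hadm i).2.1 t ht).measurable).sub
    (measurable_comp_sub_mul (hC i t ht) (hA t ht.le).measurable hx.measurable)
  set L := wealth T π (Cf i) (Eb i) (γ i) A (ϑs i) (ξs i)
  set L' := wealth T π (Cf i) (Eb i) (γ i) A
    (update (ϑs i) t (ϑs i t + ξs i t - x)) (update (ξs i) t x)
  have hL' : L' = L + D := funext (wealth_update_abatement ht x)
  have hL'_meas : Measurable L' :=
    hL' ▸ ((hadm i).measurable_wealth (hC i) (hEb i) hA (hγ i)).add (hD.mono (ℱ.le t) le_rfl)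
  have hUL : ∀ ω, U i (L ω) ≤ U i (L' ω) := fun ω =>
    (hU i).monotone <| by
      simpa only [hL', Pi.add_apply, le_add_iff_nonneg_right, D, sub_nonneg] using hle ω
  have hUL'_meas : AEMeasurable (fun ω => U i (L' ω)) P :=
    ((hU i).monotone.measurable.comp hL'_meas).aemeasurable
  by_contra hS
  refine (hopt i _ _ ((hadm i).update_abatement ht hx hxE)
    (.of_integrable_le (hint i) hUL'_meas hUL)).not_gt
    (eexp_lt_eexp (hint i) hUL'_meas hUL (mt (measure_mono_null fun ω hω => ?_) hS))
  exact (hU i) <| show L ω < L' ω by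
    simpa only [hL', Pi.add_apply, lt_add_iff_pos_right, D, sub_pos] using hω.out

lemma IsEquilibrium.ae_abatement_cost_le (heq : IsEquilibrium P ℱ T π Eb Cf γ U A ϑs ξs)
    (hEb : ∀ i, ∀ t < T, StronglyMeasurable[ℱ t] (Eb i t))
    (hC : ∀ i, ∀ t < T,
      Measurable[(inferInstance : MeasurableSpace ℝ).prod (ℱ t)] (uncurry (Cf i t)))
    (hγ : ∀ i, Measurable (γ i)) (hU : ∀ i, StrictMono (U i))
    (hA : ∀ t ≤ T, StronglyMeasurable[ℱ t] (A t)) (i : I) (ht : t < T) {x : Ω → ℝ}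
    (hx : StronglyMeasurable[ℱ t] x) (hxE : ∀ ω, x ω ∈ Icc 0 (Eb i t ω)) :
    ∀ᵐ ω ∂P, Cf i t (ξs i t ω) ω - A t ω * ξs i t ω ≤ Cf i t (x ω) ω - A t ω * x ω := by
  obtain ⟨-, hξ, hξE⟩ := heq.1 i
  set cost : Ω → ℝ → ℝ := fun ω y => Cf i t y ω - A t ω * y
  set S := {ω | cost ω (x ω) < cost ω (ξs i t ω)}
  have hS : MeasurableSet[ℱ t] S := measurableSet_lt
    (measurable_comp_sub_mul (hC i t ht) (hA t ht.le).measurable hx.measurable)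
    (measurable_comp_sub_mul (hC i t ht) (hA t ht.le).measurable (hξ t ht).measurable)
  set x' := S.piecewise x (ξs i t)
  have hx'_mem : ∀ ω ∈ S, x' ω = x ω := fun ω hω => piecewise_eq_of_mem _ _ _ hω
  have hx'_notMem : ∀ ω ∉ S, x' ω = ξs i t ω := fun ω hω => piecewise_eq_of_notMem _ _ _ hω
  have hx'E : ∀ ω, x' ω ∈ Icc 0 (Eb i t ω) := fun ω => by
    by_cases hω : ω ∈ S
    · rw [hx'_mem ω hω]; exact hxE ω
    · rw [hx'_notMem ω hω]; exact hξE t ht ω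
  have hx'_le : ∀ ω, cost ω (x' ω) ≤ cost ω (ξs i t ω) := fun ω => by
    by_cases hω : ω ∈ S
    · rw [hx'_mem ω hω]; exact hω.out.le
    · rw [hx'_notMem ω hω]
  have hnull := heq.measure_abatement_saving_eq_zero hEb hC hγ hU hA i ht
    (hx.piecewise hS (hξ t ht)) hx'E hx'_le
  rw [ae_iff]
  refine measure_mono_null (fun ω hω => ?_) hnull
  have hωS : ω ∈ S := not_le.1 hω
  show cost ω (x' ω) < cost ω (ξs i t ω)
  rw [hx'_mem ω hωS]
  exact hωS

end Equilibrium

theorem equilibrium_abatement_eq_abatement_volume_general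
    {Ω : Type*} [m0 : MeasurableSpace Ω]
    (P : Measure Ω) [IsProbabilityMeasure P]
    (ℱ : MeasureTheory.Filtration ℕ m0)
    (T : ℕ)
    {I : Type*} [Fintype I]
    (Eb : I → ℕ → Ω → ℝ)
    (hEb_adapted : ∀ i, ∀ t < T, StronglyMeasurable[ℱ t] (Eb i t))
    (Cf : I → ℕ → ℝ → Ω → ℝ)
    (hC_meas : ∀ i, ∀ t < T,
      Measurable[(inferInstance : MeasurableSpace ℝ).prod (ℱ t)]
        (Function.uncurry (Cf i t)))
    (hC_conv : ∀ i ω, ∀ t < T, StrictConvexOn ℝ (Set.Ici 0) fun x => Cf i t x ω)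
    (hC_cont : ∀ i ω, ∀ t < T, ContinuousOn (fun x => Cf i t x ω) (Set.Ici 0))
    (γ : I → Ω → ℝ) (hγ : ∀ i, Measurable (γ i))
    (π : ℝ)
    (U : I → ℝ → ℝ)
    (hU_mono : ∀ i, StrictMono (U i))
    (A : ℕ → Ω → ℝ)
    (hA_adapted : ∀ t ≤ T, StronglyMeasurable[ℱ t] (A t))
    (ϑs ξs : I → ℕ → Ω → ℝ)
    (heq : IsEquilibrium P ℱ T π Eb Cf γ U A ϑs ξs) :
    ∀ i, ∀ t < T, ∀ᵐ ω ∂P,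
      ξs i t ω ∈ Set.Icc 0 (Eb i t ω) ∧
      IsMinOn (fun x => Cf i t x ω - A t ω * x) (Set.Icc 0 (Eb i t ω)) (ξs i t ω) ∧
      ∀ x ∈ Set.Icc 0 (Eb i t ω),
        IsMinOn (fun y => Cf i t y ω - A t ω * y) (Set.Icc 0 (Eb i t ω)) x →
        x = ξs i t ω := by
  intro i t ht
  have hξE : ∀ ω, ξs i t ω ∈ Icc 0 (Eb i t ω) := (heq.1 i).2.2 t ht
  have hclamp : ∀ q : ℚ, StronglyMeasurable[ℱ t] fun ω => max 0 (min (Eb i t ω) q) := fun _ =>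
    (measurable_const.max ((hEb_adapted i t ht).measurable.min measurable_const)).stronglyMeasurable
  have hle_rat : ∀ᵐ ω ∂P, ∀ q : ℚ, Cf i t (ξs i t ω) ω - A t ω * ξs i t ω ≤
      Cf i t (max 0 (min (Eb i t ω) q)) ω - A t ω * max 0 (min (Eb i t ω) q) :=
    ae_all_iff.2 fun q => heq.ae_abatement_cost_le hEb_adapted hC_meas hγ hU_mono hA_adapted i ht
      (hclamp q) fun ω => ⟨le_max_left _ _, max_le ((hξE ω).1.trans (hξE ω).2) (min_le_left _ _)⟩
  filter_upwards [hle_rat] with ω hω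
  have hconv : StrictConvexOn ℝ (Icc 0 (Eb i t ω)) fun x => Cf i t x ω - A t ω * x :=
    ((hC_conv i ω t ht).sub_concaveOn ((LinearMap.mul ℝ ℝ (A t ω)).concaveOn (convex_Ici 0))).subset
      Icc_subset_Ici_self (convex_Icc _ _)
  have hmin := isMinOn_Icc_of_forall_rat_le
    (((hC_cont i ω t ht).mono Icc_subset_Ici_self).sub (continuousOn_const.mul continuousOn_id))
    (hξE ω) hω
  exact ⟨hξE ω, hmin, fun x hx hxmin => hconv.eq_of_isMinOn hxmin hmin hx (hξE ω)⟩

/-- **Proposition 1(b).** In the emissions market model, if `(A*_t)_{t=0}^T`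
is an equilibrium allowance price process with corresponding equilibrium policies
`(ϑ*^i, ξ*^i)`, then for each agent `i` and each `t = 0, …, T−1`, the equilibrium abatement
equals the abatement volume `ξ*^i_t = c^i_t(A*_t)`: almost surely, `ξ*^i_t` is the unique
minimizer of `x ↦ C^i_t(x) − A*_t · x` over `[0, E^i_t]`. -/
theorem equilibrium_abatement_eq_abatement_volume
    {Ω : Type*} [m0 : MeasurableSpace Ω]
    (P : Measure Ω) [IsProbabilityMeasure P]
    (ℱ : MeasureTheory.Filtration ℕ m0)
    (hF0 : ∀ s : Set Ω, MeasurableSet[ℱ 0] s → P s = 0 ∨ P s = 1)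
    (T : ℕ) (hT : 0 < T)
    {I : Type*} [Fintype I] [Nonempty I]
    (Eb : I → ℕ → Ω → ℝ)
    (hEb_adapted : ∀ i, ∀ t < T, StronglyMeasurable[ℱ t] (Eb i t))
    (hEb_nonneg : ∀ i t ω, 0 ≤ Eb i t ω)
    (Cf : I → ℕ → ℝ → Ω → ℝ)
    (hC_meas : ∀ i, ∀ t < T,
      Measurable[(inferInstance : MeasurableSpace ℝ).prod (ℱ t)]
        (Function.uncurry (Cf i t)))
    (hC_conv : ∀ i ω, ∀ t < T, StrictConvexOn ℝ (Set.Ici 0) fun x => Cf i t x ω)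
    (hC_cont : ∀ i ω, ∀ t < T, ContinuousOn (fun x => Cf i t x ω) (Set.Ici 0))
    (hC_zero : ∀ i ω, ∀ t < T, Cf i t 0 ω = 0)
    (γ : I → Ω → ℝ) (hγ : ∀ i, Measurable (γ i))
    (π : ℝ) (hπ : 0 < π)
    (U : I → ℝ → ℝ)
    (hU_cont : ∀ i, Continuous (U i))
    (hU_mono : ∀ i, StrictMono (U i))
    (hU_conc : ∀ i, ConcaveOn ℝ Set.univ (U i))
    (A : ℕ → Ω → ℝ)
    (hA_adapted : ∀ t ≤ T, StronglyMeasurable[ℱ t] (A t))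
    (ϑs ξs : I → ℕ → Ω → ℝ)
    (heq : IsEquilibrium P ℱ T π Eb Cf γ U A ϑs ξs) :
    ∀ i, ∀ t < T, ∀ᵐ ω ∂P,
      ξs i t ω ∈ Set.Icc 0 (Eb i t ω) ∧
      IsMinOn (fun x => Cf i t x ω - A t ω * x) (Set.Icc 0 (Eb i t ω)) (ξs i t ω) ∧
      ∀ x ∈ Set.Icc 0 (Eb i t ω),
        IsMinOn (fun y => Cf i t y ω - A t ω * y) (Set.Icc 0 (Eb i t ω)) x →
        x = ξs i t ω :=
  equilibrium_abatement_eq_abatement_volume_general (m0 := m0) P ℱ T Eb hEb_adapted Cf hC_meas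
    hC_conv hC_cont γ hγ π U hU_mono A hA_adapted ϑs ξs heq
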